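/- For any σ > 0 and y ∈ ℝ, the critical-point equation for CRPS of a zero-mean Gaussian forecast, namely ∂/∂σ ∫ (Φ(x/σ) - 𝟙{x≥y})² dx = 0, is equivalent to √2 · e^{-y²/(2σ²)} = 1, using the identity Φ(a) + Φ(-a) = 1 for all a ∈ ℝ. -/

import Mathlib

open MeasureTheory Set Real

/-- Standard normal CDF. -/
noncomputable def stdNormalCDF (x : ℝ) : ℝ :=
  ∫ t in Set.Iic x, Real.exp (-t ^ 2 / 2) / Real.sqrt (2 * Real.pi)

/-- CRPS of the zero-mean Gaussian forecast `N(0, σ²)` against observation `y`. -/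
noncomputable def gaussCRPS (y : ℝ) (σ : ℝ) : ℝ :=
  ∫ x : ℝ, (stdNormalCDF (x / σ) - (if y ≤ x then (1 : ℝ) else 0)) ^ 2

open Filter Topology

noncomputable def phi (t : ℝ) : ℝ := Real.exp (-t ^ 2 / 2) / Real.sqrt (2 * Real.pi)

lemma phi_eq : phi = fun t => Real.exp (-(1/2) * t ^ 2) / Real.sqrt (2 * Real.pi) := by
  funext t; unfold phi; ring_nf
lemma phi_pos (t : ℝ) : 0 < phi t :=
  div_pos (Real.exp_pos _) (Real.sqrt_pos.2 (by positivity))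
lemma integrable_phi : Integrable phi := by
  rw [phi_eq]; exact (integrable_exp_neg_mul_sq (by norm_num)).div_const _
lemma continuous_phi : Continuous phi := by
  unfold phi; fun_prop
lemma integral_phi : ∫ t, phi t = 1 := by
  rw [phi_eq]
  rw [integral_div, integral_gaussian]
  rw [show (Real.pi / (1/2)) = 2 * Real.pi by ring]
  exact div_self (by positivity)
lemma stdNormalCDF_eq (x : ℝ) : stdNormalCDF x = ∫ t in Set.Iic x, phi t := rfl
lemma tendsto_phi_atTop : Tendsto phi atTop (𝓝 0) := by
  rw [phi_eq]
  have h1 : Tendsto (fun t : ℝ => -(1/2) * t ^ 2) atTop atBot := by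
    apply Tendsto.const_mul_atTop_of_neg (by norm_num)
    exact tendsto_pow_atTop (by norm_num)
  simpa using (Real.tendsto_exp_atBot.comp h1).div_const (Real.sqrt (2 * Real.pi))
lemma phi_neg (t : ℝ) : phi (-t) = phi t := by unfold phi; rw [neg_pow]; ring_nf
lemma tendsto_phi_atBot : Tendsto phi atBot (𝓝 0) := by
  have h := tendsto_phi_atTop.comp tendsto_neg_atBot_atTop
  refine h.congr fun t => ?_
  simp [Function.comp, phi_neg]
lemma hasDerivAt_neg_phi (t : ℝ) : HasDerivAt (fun s => -phi s) (t * phi t) t := by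
  unfold phi
  have h : HasDerivAt (fun s : ℝ => -s ^ 2 / 2) (-t) t := by
    have := ((hasDerivAt_pow 2 t).neg).div_const 2
    simpa using this.congr_deriv (by push_cast; ring)
  have := ((h.exp).div_const (Real.sqrt (2 * Real.pi))).neg
  simp only [Pi.neg_def] at this
  exact this.congr_deriv (by ring)
lemma hasDerivAt_cdf (x : ℝ) : HasDerivAt stdNormalCDF (phi x) x := by
  have key : ∀ u : ℝ, stdNormalCDF u = stdNormalCDF 0 + ∫ t in (0:ℝ)..u, phi t := by
    intro u
    rw [stdNormalCDF_eq, stdNormalCDF_eq]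
    rw [← intervalIntegral.integral_Iic_sub_Iic integrable_phi.integrableOn
      integrable_phi.integrableOn]
    ring
  have h : HasDerivAt (fun u => stdNormalCDF 0 + ∫ t in (0:ℝ)..u, phi t) (phi x) x := by
    apply HasDerivAt.const_add
    exact intervalIntegral.integral_hasDerivAt_right
      (integrable_phi.intervalIntegrable)
      (continuous_phi.stronglyMeasurableAtFilter _ _)
      continuous_phi.continuousAt
  exact h.congr_of_eventuallyEq (Filter.Eventually.of_forall fun u => (key u))
lemma oneSub_cdf (x : ℝ) : 1 - stdNormalCDF x = ∫ t in Set.Ioi x, phi t := by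
  have := intervalIntegral.integral_Iic_add_Ioi (b := x) integrable_phi.integrableOn integrable_phi.integrableOn
  rw [integral_phi] at this
  rw [← stdNormalCDF_eq] at this
  linarith
lemma cdf_neg (x : ℝ) : stdNormalCDF (-x) = 1 - stdNormalCDF x := by
  rw [oneSub_cdf, stdNormalCDF_eq]
  have h := integral_comp_neg_Iic (-x) phi
  simp only [neg_neg] at h
  rw [← h]
  exact setIntegral_congr_fun measurableSet_Iic fun t _ => (phi_neg t).symm
lemma cdf_nonneg (x : ℝ) : 0 ≤ stdNormalCDF x := by
  rw [stdNormalCDF_eq]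
  exact setIntegral_nonneg measurableSet_Iic fun t _ => (phi_pos t).le
lemma cdf_le_one (x : ℝ) : stdNormalCDF x ≤ 1 := by
  have h := oneSub_cdf x
  have : 0 ≤ ∫ t in Set.Ioi x, phi t :=
    setIntegral_nonneg measurableSet_Ioi fun t _ => (phi_pos t).le
  linarith
lemma integrableOn_mul_phi {t : ℝ} (ht : 0 < t) :
    IntegrableOn (fun s => s * phi s) (Set.Ioi t) := by
  apply integrableOn_Ioi_deriv_of_nonneg' (g := fun s => -phi s)
    (fun s _ => hasDerivAt_neg_phi s)
    (fun s hs => mul_nonneg (le_trans ht.le hs.out.le) (phi_pos s).le)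
  simpa using tendsto_phi_atTop.neg
lemma integral_mul_phi {t : ℝ} (ht : 0 < t) :
    ∫ s in Set.Ioi t, s * phi s = phi t := by
  have := integral_Ioi_of_hasDerivAt_of_tendsto' (f := fun s => -phi s)
    (fun s _ => hasDerivAt_neg_phi s) (integrableOn_mul_phi ht)
    (by simpa using tendsto_phi_atTop.neg)
  simpa using this
lemma tail_bound {t : ℝ} (ht : 0 < t) : 1 - stdNormalCDF t ≤ phi t / t := by
  rw [oneSub_cdf]
  have h1 : ∫ s in Set.Ioi t, phi s ≤ ∫ s in Set.Ioi t, (s / t) * phi s := by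
    apply setIntegral_mono_on integrable_phi.integrableOn
    · have : IntegrableOn (fun s => (1/t) * (s * phi s)) (Set.Ioi t) :=
        (integrableOn_mul_phi ht).const_mul _
      exact this.congr_fun (fun s _ => by ring) measurableSet_Ioi
    · exact measurableSet_Ioi
    · intro s hs
      have h2 : 1 ≤ s / t := (one_le_div ht).2 hs.out.le
      nlinarith [phi_pos s, (phi_pos s).le]
  have h2 : ∫ s in Set.Ioi t, (s / t) * phi s = phi t / t := by
    rw [show (fun s => (s / t) * phi s) = (fun s => (1/t) * (s * phi s)) by funext s; ring]
    rw [integral_const_mul, integral_mul_phi ht]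
    ring
  linarith
lemma tendsto_cdf_atTop : Tendsto stdNormalCDF atTop (𝓝 1) := by
  have h : Tendsto (fun t => 1 - stdNormalCDF t) atTop (𝓝 0) := by
    apply squeeze_zero' (Filter.Eventually.of_forall fun t => by linarith [cdf_le_one t])
      (Filter.eventually_atTop.2 ⟨1, fun t ht => tail_bound (by linarith)⟩)
    have h2 : Tendsto (fun t : ℝ => phi t / t) atTop (𝓝 (0 * 0)) :=
      tendsto_phi_atTop.mul tendsto_inv_atTop_zero |>.congr (fun t => by rw [div_eq_mul_inv]) |>.mono_left le_rfl
    simpa using h2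
  have := h.const_sub 1
  simpa using this
lemma tendsto_cdf_atBot : Tendsto stdNormalCDF atBot (𝓝 0) := by
  have h := tendsto_cdf_atTop.comp tendsto_neg_atBot_atTop
  have h2 : Tendsto (fun x => 1 - stdNormalCDF (-x)) atBot (𝓝 (1-1)) := by
    exact (tendsto_const_nhds).sub h
  refine (by simpa using h2 : Tendsto (fun x => 1 - stdNormalCDF (-x)) atBot (𝓝 0)).congr fun x => ?_
  rw [cdf_neg]; ring
lemma tendsto_mul_sq_tail : Tendsto (fun t => t * (1 - stdNormalCDF t) ^ 2) atTop (𝓝 0) := by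
  apply squeeze_zero' (f := fun t => t * (1 - stdNormalCDF t)^2)
    (Filter.eventually_atTop.2 ⟨0, fun t ht => by positivity⟩)
    (g := fun t => phi t ^ 2 / t)
  · refine Filter.eventually_atTop.2 ⟨1, fun t ht => ?_⟩
    have h1 : (0:ℝ) < t := by linarith
    have h2 := tail_bound h1
    have h3 : 0 ≤ 1 - stdNormalCDF t := by linarith [cdf_le_one t]
    calc t * (1 - stdNormalCDF t)^2 ≤ t * (phi t / t)^2 := by
          apply mul_le_mul_of_nonneg_left _ h1.le
          exact pow_le_pow_left₀ h3 h2 2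
      _ = phi t ^2 / t := by field_simp
  · have h2 : Tendsto (fun t : ℝ => phi t ^2 * t⁻¹) atTop (𝓝 (0^2 * 0)) :=
      (tendsto_phi_atTop.pow 2).mul tendsto_inv_atTop_zero
    simpa [div_eq_mul_inv] using h2
lemma hasDerivAt_phi (t : ℝ) : HasDerivAt phi (-(t * phi t)) t := by
  have := (hasDerivAt_neg_phi t).neg
  simpa [Pi.neg_def] using this
lemma phi_sq (t : ℝ) : Real.sqrt 2 * phi (Real.sqrt 2 * t) / Real.sqrt Real.pi
    = 2 * phi t ^ 2 := by
  unfold phi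
  have h2 : Real.sqrt 2 * Real.sqrt Real.pi = Real.sqrt (2 * Real.pi) := by
    rw [← Real.sqrt_mul (by norm_num)]
  have hsq : (Real.sqrt 2 * t) ^ 2 = 2 * t ^ 2 := by
    rw [mul_pow, Real.sq_sqrt (by norm_num)]
  rw [hsq]
  rw [div_pow, ← Real.exp_nat_mul]
  have hππ : Real.sqrt (2 * Real.pi) ^ 2 = 2 * Real.pi := Real.sq_sqrt (by positivity)
  rw [hππ]
  have hexp : Real.exp (-(2 * t ^ 2) / 2) = Real.exp ((2:ℕ) * (-t ^ 2 / 2)) := by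
    congr 1; push_cast; ring
  rw [hexp]
  have hs2 : (0:ℝ) < Real.sqrt 2 := Real.sqrt_pos.2 (by norm_num)
  have hsp : (0:ℝ) < Real.sqrt Real.pi := Real.sqrt_pos.2 Real.pi_pos
  have hs2p : (0:ℝ) < Real.sqrt (2 * Real.pi) := Real.sqrt_pos.2 (by positivity)
  field_simp
  have h3 : Real.sqrt Real.pi * Real.sqrt Real.pi = Real.pi := Real.mul_self_sqrt Real.pi_pos.le
  linear_combination (-Real.sqrt 2) * h3 + Real.sqrt Real.pi * h2
noncomputable def Fp (t : ℝ) : ℝ :=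
  t * (1 - stdNormalCDF t) ^ 2 - 2 * phi t * (1 - stdNormalCDF t)
    - stdNormalCDF (Real.sqrt 2 * t) / Real.sqrt Real.pi
lemma hasDerivAt_Fp (t : ℝ) : HasDerivAt Fp ((1 - stdNormalCDF t) ^ 2) t := by
  have hΦ := hasDerivAt_cdf t
  have hsub : HasDerivAt (fun s => 1 - stdNormalCDF s) (-phi t) t := by
    simpa using hΦ.const_sub 1
  have h1 := (hasDerivAt_id t).mul (hsub.pow 2)
  have h2 : HasDerivAt (fun s => 2 * phi s * (1 - stdNormalCDF s))
      (2 * (-(t * phi t)) * (1 - stdNormalCDF t) + 2 * phi t * (-phi t)) t :=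
    (((hasDerivAt_phi t).const_mul 2).mul hsub)
  have h3 : HasDerivAt (fun s => stdNormalCDF (Real.sqrt 2 * s) / Real.sqrt Real.pi)
      (Real.sqrt 2 * phi (Real.sqrt 2 * t) / Real.sqrt Real.pi) t := by
    have hc : HasDerivAt (fun s : ℝ => Real.sqrt 2 * s) (Real.sqrt 2) t := by
      simpa using (hasDerivAt_id t).const_mul (Real.sqrt 2)
    have := ((hasDerivAt_cdf (Real.sqrt 2 * t)).comp t hc).div_const (Real.sqrt Real.pi)
    exact this.congr_deriv (by ring)
  have H := (h1.sub h2).sub h3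
  apply H.congr_deriv
  rw [phi_sq]
  simp only [id_eq, Pi.pow_apply]
  push_cast
  ring
lemma tendsto_Fp_atTop : Tendsto Fp atTop (𝓝 (-(1 / Real.sqrt Real.pi))) := by
  have h1 := tendsto_mul_sq_tail
  have h2 : Tendsto (fun t => 2 * phi t * (1 - stdNormalCDF t)) atTop (𝓝 (2 * 0 * (1 - 1))) :=
    ((tendsto_phi_atTop.const_mul 2).mul (tendsto_const_nhds.sub tendsto_cdf_atTop))
  have h3 : Tendsto (fun t => stdNormalCDF (Real.sqrt 2 * t) / Real.sqrt Real.pi) atTop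
      (𝓝 (1 / Real.sqrt Real.pi)) := by
    have hst : Tendsto (fun t : ℝ => Real.sqrt 2 * t) atTop atTop :=
      Tendsto.const_mul_atTop (Real.sqrt_pos.2 (by norm_num)) tendsto_id
    exact (tendsto_cdf_atTop.comp hst).div_const _
  have := (h1.sub h2).sub h3
  unfold Fp
  simpa using this
lemma integrableOn_tail_sq (u : ℝ) :
    IntegrableOn (fun t => (1 - stdNormalCDF t) ^ 2) (Set.Ioi u) := by
  apply integrableOn_Ioi_deriv_of_nonneg' (g := Fp) (fun t _ => hasDerivAt_Fp t)
    (fun t _ => sq_nonneg _) tendsto_Fp_atTop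
lemma integral_tail_sq (u : ℝ) :
    ∫ t in Set.Ioi u, (1 - stdNormalCDF t) ^ 2 = -(1 / Real.sqrt Real.pi) - Fp u :=
  integral_Ioi_of_hasDerivAt_of_tendsto' (fun t _ => hasDerivAt_Fp t)
    (integrableOn_tail_sq u) tendsto_Fp_atTop
lemma integral_head_sq (u : ℝ) :
    ∫ t in Set.Iic u, (stdNormalCDF t) ^ 2 = -(1 / Real.sqrt Real.pi) - Fp (-u) := by
  have h := integral_comp_neg_Iic u (fun t => (1 - stdNormalCDF t) ^ 2)
  rw [← integral_tail_sq (-u), ← h]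
  apply setIntegral_congr_fun measurableSet_Iic
  intro t _
  show stdNormalCDF t ^ 2 = (1 - stdNormalCDF (-t)) ^ 2
  rw [cdf_neg]
  ring
lemma integrableOn_head_sq (u : ℝ) :
    IntegrableOn (fun t => (stdNormalCDF t) ^ 2) (Set.Iic u) := by
  have A : MeasurableEmbedding (fun x : ℝ => -x) :=
    (Homeomorph.neg ℝ).isClosedEmbedding.measurableEmbedding
  have h := integrableOn_tail_sq (-u)
  rw [← Measure.map_neg_eq_self (volume : Measure ℝ)] at h
  have h2 := (A.integrableOn_map_iff).1 h
  have hpre : (fun x : ℝ => -x) ⁻¹' (Set.Ioi (-u)) = Set.Iio u := by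
    ext x; simp [neg_lt]
  rw [hpre] at h2
  rw [integrableOn_Iic_iff_integrableOn_Iio]
  apply h2.congr_fun _ measurableSet_Iio
  intro t _
  show ((fun t => (1 - stdNormalCDF t) ^ 2) ∘ fun x => -x) t = stdNormalCDF t ^ 2
  simp only [Function.comp]
  rw [cdf_neg]
  ring

lemma core_eq (u : ℝ) :
    ∫ t : ℝ, (stdNormalCDF t - (if u ≤ t then (1:ℝ) else 0)) ^ 2
      = u * (2 * stdNormalCDF u - 1) + 2 * phi u - 1 / Real.sqrt Real.pi := by
  set F : ℝ → ℝ := fun t => (stdNormalCDF t - (if u ≤ t then (1:ℝ) else 0)) ^ 2 with hF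
  have hIio : ∀ t ∈ Set.Iio u, F t = (stdNormalCDF t) ^ 2 := by
    intro t ht
    simp only [hF, if_neg (not_le.2 ht.out)]
    ring
  have hIci : ∀ t ∈ Set.Ici u, F t = (1 - stdNormalCDF t) ^ 2 := by
    intro t ht
    simp only [hF, if_pos ht.out]
    ring
  have hInt1 : IntegrableOn F (Set.Iio u) := by
    apply ((integrableOn_head_sq u).mono_set Set.Iio_subset_Iic_self).congr_fun _ measurableSet_Iio
    exact fun t ht => (hIio t ht).symm
  have hInt2 : IntegrableOn F (Set.Ici u) := by
    rw [integrableOn_Ici_iff_integrableOn_Ioi]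
    apply ((integrableOn_tail_sq u)).congr_fun _ measurableSet_Ioi
    exact fun t ht => (hIci t (le_of_lt ht.out)).symm
  rw [← intervalIntegral.integral_Iio_add_Ici hInt1 hInt2]
  have e1 : ∫ t in Set.Iio u, F t = -(1 / Real.sqrt Real.pi) - Fp (-u) := by
    rw [setIntegral_congr_fun measurableSet_Iio hIio,
      setIntegral_congr_set Iio_ae_eq_Iic, integral_head_sq]
  have e2 : ∫ t in Set.Ici u, F t = -(1 / Real.sqrt Real.pi) - Fp u := by
    rw [setIntegral_congr_fun measurableSet_Ici hIci,
      setIntegral_congr_set Ioi_ae_eq_Ici.symm, integral_tail_sq]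
  rw [e1, e2]
  have hfp : Fp (-u) = -u * (stdNormalCDF u) ^ 2 - 2 * phi u * stdNormalCDF u
      - (1 - stdNormalCDF (Real.sqrt 2 * u)) / Real.sqrt Real.pi := by
    unfold Fp
    rw [show Real.sqrt 2 * -u = -(Real.sqrt 2 * u) by ring, cdf_neg, cdf_neg, phi_neg]
    ring
  rw [hfp]
  unfold Fp
  ring
lemma crps_eq {y σ' : ℝ} (hσ' : 0 < σ') :
    gaussCRPS y σ' = y * (2 * stdNormalCDF (y / σ') - 1) + 2 * σ' * phi (y / σ')
      - σ' / Real.sqrt Real.pi := by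
  set g : ℝ → ℝ := fun x => (stdNormalCDF (x / σ') - (if y ≤ x then (1:ℝ) else 0)) ^ 2 with hg
  have h1 : gaussCRPS y σ' = σ' * ∫ x, g (σ' * x) := by
    rw [MeasureTheory.Measure.integral_comp_mul_left g σ']
    rw [abs_of_pos (inv_pos.2 hσ'), smul_eq_mul]
    rw [gaussCRPS]
    field_simp
    rfl
  have h2 : ∀ x : ℝ, g (σ' * x)
      = (stdNormalCDF x - (if y / σ' ≤ x then (1:ℝ) else 0)) ^ 2 := by
    intro x
    have hx : σ' * x / σ' = x := by field_simp
    have hiff : y ≤ σ' * x ↔ y / σ' ≤ x := by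
      rw [div_le_iff₀ hσ', mul_comm]
    simp only [hg, hx, hiff]
  have h3 : σ' * ∫ x, g (σ' * x)
      = σ' * ((y / σ') * (2 * stdNormalCDF (y / σ') - 1) + 2 * phi (y / σ')
          - 1 / Real.sqrt Real.pi) := by
    congr 1
    rw [show (fun x => g (σ' * x)) = fun x => (stdNormalCDF x - (if y / σ' ≤ x then (1:ℝ) else 0)) ^ 2 from funext h2]
    exact core_eq (y / σ')
  rw [h1, h3]
  field_simp
lemma hasDerivAt_crps {y σ : ℝ} (hσ : 0 < σ) :
    HasDerivAt (gaussCRPS y) (2 * phi (y / σ) - 1 / Real.sqrt Real.pi) σ := by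
  set c := y / σ with hc
  have hσ0 : σ ≠ 0 := hσ.ne'
  have hq : HasDerivAt (fun s : ℝ => y / s) (-(y / σ ^ 2)) σ := by
    have := (hasDerivAt_inv hσ0).const_mul y
    apply this.congr_deriv
    field_simp
  have hΦc : HasDerivAt (fun s => stdNormalCDF (y / s)) (phi c * -(y / σ ^ 2)) σ :=
    HasDerivAt.comp (h₂ := stdNormalCDF) σ (hasDerivAt_cdf c) hq
  have hφc : HasDerivAt (fun s => phi (y / s)) (-(c * phi c) * -(y / σ ^ 2)) σ :=
    HasDerivAt.comp (h₂ := phi) σ (hasDerivAt_phi c) hq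
  have h1 : HasDerivAt (fun s => y * (2 * stdNormalCDF (y / s) - 1))
      (y * (2 * (phi c * -(y / σ ^ 2)))) σ := by
    exact (((hΦc.const_mul 2).sub_const 1).const_mul y).congr_deriv (by ring)
  have h2 : HasDerivAt (fun s => 2 * s * phi (y / s))
      (2 * phi c + 2 * σ * (-(c * phi c) * -(y / σ ^ 2))) σ := by
    have := (((hasDerivAt_id σ).const_mul 2).mul hφc)
    apply this.congr_deriv
    simp only [id_eq]
    ring
  have h3 : HasDerivAt (fun s : ℝ => s / Real.sqrt Real.pi) (1 / Real.sqrt Real.pi) σ := by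
    simpa using (hasDerivAt_id σ).div_const (Real.sqrt Real.pi)
  have H := (h1.add h2).sub h3
  have heq : (fun s => y * (2 * stdNormalCDF (y / s) - 1) + 2 * s * phi (y / s)
      - s / Real.sqrt Real.pi) =ᶠ[𝓝 σ] gaussCRPS y := by
    filter_upwards [eventually_gt_nhds hσ] with s hs
    rw [crps_eq hs]
  have H2 := H.congr_of_eventuallyEq heq.symm
  apply H2.congr_deriv
  rw [hc]
  field_simp
  ring
/-- The critical-point equation `∂/∂σ CRPS = 0` is equivalent to
`√2 · e^{-y²/(2σ²)} = 1`. -/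
theorem crps_critical_point_iff (y σ : ℝ) (hσ : 0 < σ) :
    deriv (gaussCRPS y) σ = 0 ↔
      Real.sqrt 2 * Real.exp (-y ^ 2 / (2 * σ ^ 2)) = 1 := by
  rw [(hasDerivAt_crps hσ).deriv]
  have hφ : phi (y / σ) = Real.exp (-y ^ 2 / (2 * σ ^ 2)) / Real.sqrt (2 * Real.pi) := by
    have hx : -(y / σ) ^ 2 / 2 = -y ^ 2 / (2 * σ ^ 2) := by
      rw [div_pow]
      ring
    unfold phi
    rw [hx]
  rw [hφ]
  have h2π : Real.sqrt (2 * Real.pi) = Real.sqrt 2 * Real.sqrt Real.pi :=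
    Real.sqrt_mul (by norm_num) _
  have hs2 : (0:ℝ) < Real.sqrt 2 := Real.sqrt_pos.2 (by norm_num)
  have hsp : (0:ℝ) < Real.sqrt Real.pi := Real.sqrt_pos.2 Real.pi_pos
  set E := Real.exp (-y ^ 2 / (2 * σ ^ 2)) with hE
  have key : 2 * (E / Real.sqrt (2 * Real.pi)) - 1 / Real.sqrt Real.pi
      = (Real.sqrt 2 * E - 1) / Real.sqrt Real.pi := by
    rw [h2π]
    have h22 : Real.sqrt 2 * Real.sqrt 2 = 2 := Real.mul_self_sqrt (by norm_num)
    field_simp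
    linear_combination (-E) * h22
  rw [key, div_eq_zero_iff, sub_eq_zero]
  constructor
  · rintro (h | h)
    · exact h
    · exact absurd h hsp.ne'
  · exact fun h => Or.inl h
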